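/- arXiv:1604.02012 — 5 statements merged into one kernel-verified Lean document; each statement's English description precedes it below -/
import Mathlib

section
/- Let E be a Lie algebra over a field k of characteristic zero and N : E → E a k-linear map whose Nijenhuis torsion vanishes, i.e. T_N(x,y) = 0 for all x,y ∈ E. Then the N-deformed bracket [x,y]_N := [N(x),y] + [x,N(y)] − N([x,y]) is again a Lie bracket on E: it is k-bilinear, alternating, and satisfies the Jacobi identity [x,[y,z]_N]_N + [y,[z,x]_N]_N + [z,[x,y]_N]_N = 0 for all x,y,z ∈ E. -/
/-- The `N`-deformed bracket `[x,y]_N := [N x, y] + [x, N y] − N [x,y]`. -/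
def deformedBracket {k E : Type*} [CommRing k] [LieRing E] [LieAlgebra k E]
    (N : E →ₗ[k] E) (x y : E) : E :=
  ⁅N x, y⁆ + ⁅x, N y⁆ - N ⁅x, y⁆

/-- The Nijenhuis torsion `T_N(x,y) := [N x, N y] − N([N x,y] + [x,N y] − N [x,y])`. -/
def nijenhuisTorsion {k E : Type*} [CommRing k] [LieRing E] [LieAlgebra k E]
    (N : E →ₗ[k] E) (x y : E) : E :=
  ⁅N x, N y⁆ - N (⁅N x, y⁆ + ⁅x, N y⁆ - N ⁅x, y⁆)

/-- If the Nijenhuis torsion of `N` vanishes, the `N`-deformed bracket is a Lie bracket: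
k-bilinear, alternating and satisfying the Jacobi identity. -/
theorem deformedBracket_isLieBracket {k E : Type*} [Field k] [CharZero k]
    [LieRing E] [LieAlgebra k E] (N : E →ₗ[k] E)
    (hN : ∀ x y : E, nijenhuisTorsion N x y = 0) :
    (∀ (a b : k) (x x' y : E),
        deformedBracket N (a • x + b • x') y =
          a • deformedBracket N x y + b • deformedBracket N x' y) ∧
    (∀ (a b : k) (x y y' : E),
        deformedBracket N x (a • y + b • y') =
          a • deformedBracket N x y + b • deformedBracket N x y') ∧
    (∀ x : E, deformedBracket N x x = 0) ∧
    (∀ x y z : E,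
        deformedBracket N x (deformedBracket N y z) +
        deformedBracket N y (deformedBracket N z x) +
        deformedBracket N z (deformedBracket N x y) = 0) := by
  have hc : ∀ a b : E, N (⁅N a, b⁆ + ⁅a, N b⁆ - N ⁅a, b⁆) = ⁅N a, N b⁆ := by
    intro a b
    have := hN a b
    rw [nijenhuisTorsion, sub_eq_zero] at this
    exact this.symm
  have key : ∀ a b : E, ⁅N a, N b⁆ = N ⁅N a, b⁆ + N ⁅a, N b⁆ - N (N ⁅a, b⁆) := by
    intro a b
    rw [← hc a b, map_sub, map_add]
  refine ⟨?_, ?_, ?_, ?_⟩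
  · intro a b x x' y
    simp only [deformedBracket, map_add, map_smul, add_lie, smul_lie, lie_add, lie_smul,
      smul_add, smul_sub]
    abel
  · intro a b x y y'
    simp only [deformedBracket, map_add, map_smul, add_lie, smul_lie, lie_add, lie_smul,
      smul_add, smul_sub]
    abel
  · intro x
    simp only [deformedBracket, lie_self, map_zero, sub_zero, ← lie_skew (N x) x]
    abel
  · intro x y z
    simp only [deformedBracket]
    rw [hc y z, hc z x, hc x y]
    simp only [lie_add, lie_sub, map_add, map_sub]
    rw [key x ⁅y, z⁆, key y ⁅z, x⁆, key z ⁅x, y⁆]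
    have J1 := lie_jacobi (N x) (N y) z
    have J2 := lie_jacobi (N y) (N z) x
    have J3 := lie_jacobi (N z) (N x) y
    have K1 : N ⁅N x, ⁅y, z⁆⁆ + N ⁅y, ⁅z, N x⁆⁆ + N ⁅z, ⁅N x, y⁆⁆ = 0 := by
      rw [← map_add, ← map_add, lie_jacobi, map_zero]
    have K2 : N ⁅N y, ⁅z, x⁆⁆ + N ⁅z, ⁅x, N y⁆⁆ + N ⁅x, ⁅N y, z⁆⁆ = 0 := by
      rw [← map_add, ← map_add, lie_jacobi, map_zero]
    have K3 : N ⁅N z, ⁅x, y⁆⁆ + N ⁅x, ⁅y, N z⁆⁆ + N ⁅y, ⁅N z, x⁆⁆ = 0 := by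
      rw [← map_add, ← map_add, lie_jacobi, map_zero]
    have K4 : N (N ⁅x, ⁅y, z⁆⁆) + N (N ⁅y, ⁅z, x⁆⁆) + N (N ⁅z, ⁅x, y⁆⁆) = 0 := by
      rw [← map_add, ← map_add, ← map_add, ← map_add, lie_jacobi, map_zero, map_zero]
    calc _ = (⁅N x, ⁅N y, z⁆⁆ + ⁅N y, ⁅z, N x⁆⁆ + ⁅z, ⁅N x, N y⁆⁆) +
          (⁅N y, ⁅N z, x⁆⁆ + ⁅N z, ⁅x, N y⁆⁆ + ⁅x, ⁅N y, N z⁆⁆) +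
          (⁅N z, ⁅N x, y⁆⁆ + ⁅N x, ⁅y, N z⁆⁆ + ⁅y, ⁅N z, N x⁆⁆) -
          (N ⁅N x, ⁅y, z⁆⁆ + N ⁅y, ⁅z, N x⁆⁆ + N ⁅z, ⁅N x, y⁆⁆) -
          (N ⁅N y, ⁅z, x⁆⁆ + N ⁅z, ⁅x, N y⁆⁆ + N ⁅x, ⁅N y, z⁆⁆) -
          (N ⁅N z, ⁅x, y⁆⁆ + N ⁅x, ⁅y, N z⁆⁆ + N ⁅y, ⁅N z, x⁆⁆) +
          (N (N ⁅x, ⁅y, z⁆⁆) + N (N ⁅y, ⁅z, x⁆⁆) + N (N ⁅z, ⁅x, y⁆⁆)) := by abel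
      _ = 0 := by rw [J1, J2, J3, K1, K2, K3, K4]; abel
end

section
/- Let E be a Lie algebra over a field k of characteristic zero and N : E → E a k-linear map whose Nijenhuis torsion vanishes, i.e. T_N(x,y) = 0 for all x,y ∈ E. Then the Lie bracket [·,·] of E and the N-deformed bracket [·,·]_N are compatible: the bracket (x,y) ↦ [x,y] + [x,y]_N is again a Lie bracket on E (bilinear, alternating, and satisfying the Jacobi identity). -/
/-- If the Nijenhuis torsion of `N` vanishes, then the original Lie bracket and the
`N`-deformed bracket are compatible: their sum is again a Lie bracket (bilinear,
alternating and satisfying the Jacobi identity). -/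
theorem lieBracket_add_deformedBracket_isLieBracket {k E : Type*} [Field k] [CharZero k]
    [LieRing E] [LieAlgebra k E] (N : E →ₗ[k] E)
    (hN : ∀ x y : E, nijenhuisTorsion N x y = 0) :
    let br : E → E → E := fun x y => ⁅x, y⁆ + deformedBracket N x y
    (∀ (a b : k) (x x' y : E), br (a • x + b • x') y = a • br x y + b • br x' y) ∧
    (∀ (a b : k) (x y y' : E), br x (a • y + b • y') = a • br x y + b • br x y') ∧
    (∀ x : E, br x x = 0) ∧
    (∀ x y z : E, br x (br y z) + br y (br z x) + br z (br x y) = 0) := by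
  intro br
  set M : E →ₗ[k] E := N + LinearMap.id with hM
  have hNkey : ∀ x y : E, ⁅N x, N y⁆ = N ⁅N x, y⁆ + N ⁅x, N y⁆ - N (N ⁅x, y⁆) := by
    intro x y
    have := hN x y
    simp only [nijenhuisTorsion, sub_eq_zero, map_add, map_sub] at this
    linear_combination (norm := abel1) this
  have hbr : ∀ x y : E, br x y = ⁅M x, y⁆ + ⁅x, M y⁆ - M ⁅x, y⁆ := by
    intro x y
    simp only [br, deformedBracket, hM, LinearMap.add_apply, LinearMap.id_apply,
      add_lie, lie_add]
    abel
  have key : ∀ x y : E, ⁅M x, M y⁆ = M ⁅M x, y⁆ + M ⁅x, M y⁆ - M (M ⁅x, y⁆) := by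
    intro x y
    simp only [hM, LinearMap.add_apply, LinearMap.id_apply, add_lie, lie_add,
      map_add]
    linear_combination (norm := abel1) hNkey x y
  have jac : ∀ a b c : E, ⁅a, ⁅b, c⁆⁆ + ⁅b, ⁅c, a⁆⁆ + ⁅c, ⁅a, b⁆⁆ = 0 :=
    fun a b c => lie_jacobi a b c
  refine ⟨?_, ?_, ?_, ?_⟩
  · intro a b x x' y
    simp only [br, deformedBracket, map_smul, map_add, add_lie, smul_lie, lie_smul]
    module
  · intro a b x y y'
    simp only [br, deformedBracket, map_smul, map_add, add_lie, lie_add, smul_lie, lie_smul]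
    module
  · intro x
    simp only [br, deformedBracket, lie_self, map_zero]
    have h := lie_skew (N x) x
    linear_combination (norm := abel1) -h
  · intro x y z
    simp only [hbr, lie_add, lie_sub, add_lie, sub_lie, map_add, map_sub]
    simp only [key]
    have h1 := jac (M x) (M y) z
    have h2 := jac (M y) (M z) x
    have h3 := jac (M z) (M x) y
    have h4 := congrArg M (jac (M x) y z)
    have h5 := congrArg M (jac x (M y) z)
    have h6 := congrArg M (jac x y (M z))
    have h7 := congrArg M (congrArg M (jac x y z))
    simp only [key, lie_add, lie_sub, add_lie, sub_lie, map_add, map_sub, map_zero]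
      at h1 h2 h3 h4 h5 h6 h7
    linear_combination (norm := abel1) h1 + h2 + h3 - h4 - h5 - h6 + h7
end

section
/- For every integer m ≥ 0, the bracket {·,·}_m on smooth real-valued functions on M = Mat_n(ℝ) × Mat_n(ℝ) is a Poisson bracket: it is ℝ-bilinear, antisymmetric, a derivation in each argument, and satisfies the Jacobi identity {f,{g,h}_m}_m + {g,{h,f}_m}_m + {h,{f,g}_m}_m = 0 for all smooth f,g,h : M → ℝ. -/
attribute [local instance] Matrix.normedAddCommGroup Matrix.normedSpace

/-- The phase space `M = Mat_n(ℝ) × Mat_n(ℝ)`. -/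
abbrev MM (n : ℕ) := Matrix (Fin n) (Fin n) ℝ × Matrix (Fin n) (Fin n) ℝ

/-- The gradient matrix `∇_X f`, with `(∇_X f)_{ij} = ∂f/∂X_{ji}`. -/
noncomputable def gradX {n : ℕ} (f : MM n → ℝ) (p : MM n) : Matrix (Fin n) (Fin n) ℝ :=
  fun i j => fderiv ℝ f p (Matrix.single j i 1, 0)

/-- The gradient matrix `∇_Y f`, with `(∇_Y f)_{ij} = ∂f/∂Y_{ji}`. -/
noncomputable def gradY {n : ℕ} (f : MM n → ℝ) (p : MM n) : Matrix (Fin n) (Fin n) ℝ :=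
  fun i j => fderiv ℝ f p (0, Matrix.single j i 1)

/-- The `m`-th bracket of the Calogero-Moser hierarchy:
`{f,g}_m(X,Y) = tr(X^m (∇_Y f ∇_X g − ∇_Y g ∇_X f))
  + Σ_{i=1}^{m} tr(Y X^{m−i} (∇_Y f X^{i−1} ∇_Y g − ∇_Y g X^{i−1} ∇_Y f))`. -/
noncomputable def pbracket {n : ℕ} (m : ℕ) (f g : MM n → ℝ) (p : MM n) : ℝ :=
  (p.1 ^ m * (gradY f p * gradX g p - gradY g p * gradX f p)).trace +
  ∑ i ∈ Finset.range m,
    (p.2 * p.1 ^ (m - 1 - i) *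
      (gradY f p * p.1 ^ i * gradY g p - gradY g p * p.1 ^ i * gradY f p)).trace

/-- Smoothness of a function on `M`. -/
def SmoothFn {n : ℕ} (f : MM n → ℝ) : Prop := ContDiff ℝ (⊤ : ℕ∞) f

namespace CMaux
variable {n : ℕ}

open Matrix Finset

theorem matrix_decomp (U : Matrix (Fin n) (Fin n) ℝ) :
    U = ∑ i : Fin n, ∑ j : Fin n, U i j • Matrix.single i j (1:ℝ) := by
  nth_rewrite 1 [Matrix.matrix_eq_sum_single U]
  refine Finset.sum_congr rfl fun i _ => Finset.sum_congr rfl fun j _ => ?_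
  rw [Matrix.smul_single, smul_eq_mul, mul_one]

theorem trace_of_mul (G U : Matrix (Fin n) (Fin n) ℝ) :
    (G * U).trace = ∑ i : Fin n, ∑ j : Fin n, U i j * G j i := by
  rw [Matrix.trace]
  simp only [Matrix.diag, Matrix.mul_apply]
  rw [Finset.sum_comm]
  exact Finset.sum_congr rfl fun i _ => Finset.sum_congr rfl fun j _ => mul_comm _ _

theorem clm_eq_trace (L : MM n →L[ℝ] ℝ) (U V : Matrix (Fin n) (Fin n) ℝ) :
    L (U, V) = (Matrix.of (fun i j => L (Matrix.single j i 1, 0)) * U).trace +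
      (Matrix.of (fun i j => L (0, Matrix.single j i 1)) * V).trace := by
  have h1 : (U, V) = ((U, 0) : MM n) + (0, V) := by simp
  have h2 : ((U, 0) : MM n) = ∑ i : Fin n, ∑ j : Fin n,
      U i j • ((Matrix.single i j (1:ℝ), 0) : MM n) := by
    ext : 1
    · simp only [Prod.fst_sum, Prod.smul_fst, Matrix.smul_single, smul_eq_mul, mul_one]
      exact Matrix.matrix_eq_sum_single U
    · simp only [Prod.snd_sum, Prod.smul_snd, smul_zero, Finset.sum_const_zero]
  have h3 : ((0, V) : MM n) = ∑ i : Fin n, ∑ j : Fin n,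
      V i j • (((0 : Matrix (Fin n) (Fin n) ℝ), Matrix.single i j (1:ℝ)) : MM n) := by
    ext : 1
    · simp only [Prod.fst_sum, Prod.smul_fst, smul_zero, Finset.sum_const_zero]
    · simp only [Prod.snd_sum, Prod.smul_snd, Matrix.smul_single, smul_eq_mul, mul_one]
      exact Matrix.matrix_eq_sum_single V
  rw [h1, map_add, h2, h3, map_sum, map_sum, trace_of_mul, trace_of_mul]
  simp only [map_sum, _root_.map_smul, smul_eq_mul, Matrix.of_apply]


theorem fderiv_eq_trace (f : MM n → ℝ) (p : MM n) (U V : Matrix (Fin n) (Fin n) ℝ) :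
    fderiv ℝ f p (U, V) = (gradX f p * U).trace + (gradY f p * V).trace :=
  clm_eq_trace (fderiv ℝ f p) U V

section grads
variable {f f' g : MM n → ℝ} {p : MM n}

theorem gradX_combo (a b : ℝ) (hf : DifferentiableAt ℝ f p) (hf' : DifferentiableAt ℝ f' p) :
    gradX (fun q => a * f q + b * f' q) p = a • gradX f p + b • gradX f' p := by
  ext i j
  show fderiv ℝ (fun q => a * f q + b * f' q) p _ = _
  erw [fderiv_fun_add ((hf.const_mul a)) ((hf'.const_mul b)), fderiv_const_mul hf a,
    fderiv_const_mul hf' b]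
  rfl

theorem gradY_combo (a b : ℝ) (hf : DifferentiableAt ℝ f p) (hf' : DifferentiableAt ℝ f' p) :
    gradY (fun q => a * f q + b * f' q) p = a • gradY f p + b • gradY f' p := by
  ext i j
  show fderiv ℝ (fun q => a * f q + b * f' q) p _ = _
  erw [fderiv_fun_add ((hf.const_mul a)) ((hf'.const_mul b)), fderiv_const_mul hf a,
    fderiv_const_mul hf' b]
  rfl

theorem gradX_mul (hf : DifferentiableAt ℝ f p) (hg : DifferentiableAt ℝ g p) :
    gradX (fun q => f q * g q) p = f p • gradX g p + g p • gradX f p := by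
  ext i j
  show fderiv ℝ (fun q => f q * g q) p _ = _
  erw [fderiv_fun_mul hf hg]
  rfl

theorem gradY_mul (hf : DifferentiableAt ℝ f p) (hg : DifferentiableAt ℝ g p) :
    gradY (fun q => f q * g q) p = f p • gradY g p + g p • gradY f p := by
  ext i j
  show fderiv ℝ (fun q => f q * g q) p _ = _
  erw [fderiv_fun_mul hf hg]
  rfl

end grads

theorem trace_combo1 (P C D A1 A2 B1 B2 : Matrix (Fin n) (Fin n) ℝ) (a b : ℝ) :
    (P * ((a • B1 + b • B2) * C - D * (a • A1 + b • A2))).trace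
      = a * (P * (B1 * C - D * A1)).trace + b * (P * (B2 * C - D * A2)).trace := by
  simp only [Matrix.add_mul, Matrix.mul_add, Matrix.smul_mul, Matrix.mul_smul,
    Matrix.mul_sub, Matrix.trace_add, Matrix.trace_sub, Matrix.trace_smul, smul_eq_mul]
  ring

theorem trace_combo2 (P Q D B1 B2 : Matrix (Fin n) (Fin n) ℝ) (a b : ℝ) :
    (P * ((a • B1 + b • B2) * Q * D - D * Q * (a • B1 + b • B2))).trace
      = a * (P * (B1 * Q * D - D * Q * B1)).trace + b * (P * (B2 * Q * D - D * Q * B2)).trace := by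
  simp only [Matrix.add_mul, Matrix.mul_add, Matrix.smul_mul, Matrix.mul_smul,
    Matrix.mul_sub, Matrix.trace_add, Matrix.trace_sub, Matrix.trace_smul, smul_eq_mul]
  ring

theorem pbracket_combo_left {m : ℕ} {F f f' g : MM n → ℝ} {a b : ℝ} {p : MM n}
    (hX : gradX F p = a • gradX f p + b • gradX f' p)
    (hY : gradY F p = a • gradY f p + b • gradY f' p) :
    pbracket m F g p = a * pbracket m f g p + b * pbracket m f' g p := by
  unfold pbracket
  rw [hX, hY, trace_combo1]
  rw [Finset.sum_congr rfl (fun i _ => trace_combo2 (p.2 * p.1 ^ (m - 1 - i)) (p.1 ^ i)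
    (gradY g p) (gradY f p) (gradY f' p) a b)]
  rw [Finset.sum_add_distrib, ← Finset.mul_sum, ← Finset.mul_sum]
  ring

theorem pbracket_antisymm (m : ℕ) (f g : MM n → ℝ) (p : MM n) :
    pbracket m f g p = - pbracket m g f p := by
  unfold pbracket
  rw [neg_add]
  congr 1
  · rw [← Matrix.trace_neg]
    congr 1
    rw [← Matrix.mul_neg]
    congr 1
    abel
  · rw [← Finset.sum_neg_distrib]
    refine Finset.sum_congr rfl fun i _ => ?_
    rw [← Matrix.trace_neg]
    congr 1
    rw [← Matrix.mul_neg]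
    congr 1
    abel


section smoothtools

noncomputable def entryCLM (i j : Fin n) : Matrix (Fin n) (Fin n) ℝ →L[ℝ] ℝ :=
  LinearMap.toContinuousLinearMap
    { toFun := fun A => A i j, map_add' := fun _ _ => rfl, map_smul' := fun _ _ => rfl }

theorem contDiff_entry {M : MM n → Matrix (Fin n) (Fin n) ℝ} (hM : ContDiff ℝ (⊤:ℕ∞) M)
    (i j : Fin n) : ContDiff ℝ (⊤:ℕ∞) (fun q => M q i j) :=
  (entryCLM i j).contDiff.comp hM

theorem contDiff_of_entries {M : MM n → Matrix (Fin n) (Fin n) ℝ}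
    (h : ∀ i j, ContDiff ℝ (⊤:ℕ∞) (fun q => M q i j)) : ContDiff ℝ (⊤:ℕ∞) M := by
  have hM : M = fun q => ∑ i : Fin n, ∑ j : Fin n, (M q i j) • Matrix.single i j (1:ℝ) :=
    funext fun q => matrix_decomp (M q)
  rw [hM]
  exact ContDiff.sum fun i _ => ContDiff.sum fun j _ => (h i j).smul contDiff_const

theorem contDiff_matmul {A B : MM n → Matrix (Fin n) (Fin n) ℝ}
    (hA : ContDiff ℝ (⊤:ℕ∞) A) (hB : ContDiff ℝ (⊤:ℕ∞) B) :
    ContDiff ℝ (⊤:ℕ∞) (fun q => A q * B q) := by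
  refine contDiff_of_entries fun i j => ?_
  have : (fun q => (A q * B q) i j) = fun q => ∑ k : Fin n, A q i k * B q k j := by
    funext q; exact Matrix.mul_apply
  rw [this]
  exact ContDiff.sum fun k _ => (contDiff_entry hA i k).mul (contDiff_entry hB k j)

theorem contDiff_trace {M : MM n → Matrix (Fin n) (Fin n) ℝ} (hM : ContDiff ℝ (⊤:ℕ∞) M) :
    ContDiff ℝ (⊤:ℕ∞) (fun q => (M q).trace) := by
  have : (fun q => (M q).trace) = fun q => ∑ i : Fin n, M q i i := rfl
  rw [this]
  exact ContDiff.sum fun i _ => contDiff_entry hM i i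

theorem contDiff_X : ContDiff ℝ (⊤:ℕ∞) (fun q : MM n => q.1) := contDiff_fst
theorem contDiff_Y : ContDiff ℝ (⊤:ℕ∞) (fun q : MM n => q.2) := contDiff_snd

theorem contDiff_Xpow (m : ℕ) : ContDiff ℝ (⊤:ℕ∞) (fun q : MM n => q.1 ^ m) := by
  induction m with
  | zero => simpa using contDiff_const (c := (1 : Matrix (Fin n) (Fin n) ℝ))
  | succ k ih =>
      have : (fun q : MM n => q.1 ^ (k+1)) = fun q => q.1 ^ k * q.1 := by
        funext q; rw [pow_succ]
      rw [this]; exact contDiff_matmul ih contDiff_X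

theorem contDiff_gradX {f : MM n → ℝ} (hf : SmoothFn f) :
    ContDiff ℝ (⊤:ℕ∞) (fun q => gradX f q) := by
  refine contDiff_of_entries fun i j => ?_
  have : (fun q => gradX f q i j)
      = fun q => fderiv ℝ f q (Matrix.single j i 1, 0) := rfl
  rw [this]
  exact ContDiff.clm_apply (hf.fderiv_right (by exact_mod_cast le_top)) contDiff_const

theorem contDiff_gradY {f : MM n → ℝ} (hf : SmoothFn f) :
    ContDiff ℝ (⊤:ℕ∞) (fun q => gradY f q) := by
  refine contDiff_of_entries fun i j => ?_
  have : (fun q => gradY f q i j)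
      = fun q => fderiv ℝ f q (0, Matrix.single j i 1) := rfl
  rw [this]
  exact ContDiff.clm_apply (hf.fderiv_right (by exact_mod_cast le_top)) contDiff_const

theorem contDiff_matsub {A B : MM n → Matrix (Fin n) (Fin n) ℝ}
    (hA : ContDiff ℝ (⊤:ℕ∞) A) (hB : ContDiff ℝ (⊤:ℕ∞) B) :
    ContDiff ℝ (⊤:ℕ∞) (fun q => A q - B q) := hA.sub hB

theorem pbracket_smooth {m : ℕ} {f g : MM n → ℝ} (hf : SmoothFn f) (hg : SmoothFn g) :
    SmoothFn (pbracket m f g) := by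
  unfold SmoothFn pbracket
  refine ContDiff.add ?_ (ContDiff.sum fun i _ => ?_)
  · exact contDiff_trace (contDiff_matmul (contDiff_Xpow m)
      (contDiff_matsub (contDiff_matmul (contDiff_gradY hf) (contDiff_gradX hg))
        (contDiff_matmul (contDiff_gradY hg) (contDiff_gradX hf))))
  · exact contDiff_trace (contDiff_matmul
      (contDiff_matmul contDiff_Y (contDiff_Xpow (m - 1 - i)))
      (contDiff_matsub
        (contDiff_matmul (contDiff_matmul (contDiff_gradY hf) (contDiff_Xpow i)) (contDiff_gradY hg))
        (contDiff_matmul (contDiff_matmul (contDiff_gradY hg) (contDiff_Xpow i)) (contDiff_gradY hf))))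

end smoothtools


section secondderiv

variable {f g h : MM n → ℝ} {p u v : MM n}

noncomputable def Dp (f : MM n → ℝ) (u : MM n) : MM n → ℝ := fun q => fderiv ℝ f q u

noncomputable def Hp (f : MM n → ℝ) (u v : MM n) (p : MM n) : ℝ := fderiv ℝ (Dp f u) p v

theorem contDiff_Dp (hf : SmoothFn f) (u : MM n) : ContDiff ℝ (⊤:ℕ∞) (Dp f u) :=
  ContDiff.clm_apply (hf.fderiv_right (by exact_mod_cast le_top)) contDiff_const

theorem diffAt_Dp (hf : SmoothFn f) (u : MM n) (q : MM n) : DifferentiableAt ℝ (Dp f u) q :=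
  ((contDiff_Dp hf u).differentiable (by simp)) q

theorem Hp_eq (hf : SmoothFn f) : Hp f u v p = fderiv ℝ (fderiv ℝ f) p v u := by
  have hd : DifferentiableAt ℝ (fderiv ℝ f) p :=
    ((hf.fderiv_right (m := (⊤:ℕ∞)) (by exact_mod_cast le_top)).differentiable
      (by simp)) p
  unfold Hp Dp
  erw [(hd.hasFDerivAt.clm_apply (hasFDerivAt_const u p)).fderiv]
  show fderiv ℝ f p 0 + fderiv ℝ (fderiv ℝ f) p v u = _
  rw [map_zero, zero_add]

theorem Hp_symm (hf : SmoothFn f) : Hp f u v p = Hp f v u p := by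
  rw [Hp_eq hf, Hp_eq hf]
  have hsymm : IsSymmSndFDerivAt ℝ f p :=
    (hf.contDiffAt).isSymmSndFDerivAt (by rw [minSmoothness_of_isRCLikeNormedField]; exact WithTop.coe_le_coe.mpr le_top)
  exact hsymm v u

end secondderiv


section mzero

variable {f g h : MM n → ℝ} {p : MM n}

/-- basis direction in the `X` slot -/
def εp (a : Fin n × Fin n) : MM n := (Matrix.single a.1 a.2 1, 0)
/-- basis direction in the `Y` slot (transposed index) -/
def ηp (a : Fin n × Fin n) : MM n := (0, Matrix.single a.2 a.1 1)

theorem trace_grad_eq (f g : MM n → ℝ) (p : MM n) :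
    (gradY f p * gradX g p).trace = ∑ a : Fin n × Fin n, Dp f (ηp a) p * Dp g (εp a) p := by
  rw [trace_of_mul, Fintype.sum_prod_type, Finset.sum_comm]
  refine Finset.sum_congr rfl fun j _ => Finset.sum_congr rfl fun i _ => ?_
  simp only [gradX, gradY, Dp, εp, ηp]
  exact mul_comm _ _

theorem pbracket0_eq (f g : MM n → ℝ) (p : MM n) :
    pbracket 0 f g p = ∑ a : Fin n × Fin n,
      (Dp f (ηp a) p * Dp g (εp a) p - Dp g (ηp a) p * Dp f (εp a) p) := by
  unfold pbracket
  rw [pow_zero, one_mul, Finset.range_zero, Finset.sum_empty, add_zero, Matrix.trace_sub,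
    trace_grad_eq, trace_grad_eq, ← Finset.sum_sub_distrib]

theorem fderiv_pbracket0 (hg : SmoothFn g) (hh : SmoothFn h) (p v : MM n) :
    fderiv ℝ (pbracket 0 g h) p v = ∑ b : Fin n × Fin n,
      (Hp g (ηp b) v p * Dp h (εp b) p + Dp g (ηp b) p * Hp h (εp b) v p
        - Hp h (ηp b) v p * Dp g (εp b) p - Dp h (ηp b) p * Hp g (εp b) v p) := by
  have hrw : pbracket 0 g h = fun q => ∑ b : Fin n × Fin n,
      (Dp g (ηp b) q * Dp h (εp b) q - Dp h (ηp b) q * Dp g (εp b) q) :=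
    funext fun q => pbracket0_eq g h q
  rw [hrw]
  erw [fderiv_fun_sum (fun b _ => (((diffAt_Dp hg _ p).mul (diffAt_Dp hh _ p)).sub
      ((diffAt_Dp hh _ p).mul (diffAt_Dp hg _ p))))]
  refine (map_sum (ContinuousLinearMap.apply ℝ ℝ v) _ _).trans ?_
  refine Finset.sum_congr rfl fun b _ => ?_
  erw [fderiv_sub ((diffAt_Dp hg _ p).mul (diffAt_Dp hh _ p))
    ((diffAt_Dp hh _ p).mul (diffAt_Dp hg _ p))]
  erw [fderiv_mul (diffAt_Dp hg _ p) (diffAt_Dp hh _ p),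
    fderiv_mul (diffAt_Dp hh _ p) (diffAt_Dp hg _ p)]
  show Dp g _ p * Hp h _ v p + Dp h _ p * Hp g _ v p
      - (Dp h _ p * Hp g _ v p + Dp g _ p * Hp h _ v p) = _
  ring

/-- one cyclic term of the Jacobiator, in normal form -/
def jterm (fE fN gE gN hE hN : Fin n × Fin n → ℝ)
    (gH1 gH2 gH3 hH1 hH2 hH3 : Fin n × Fin n → Fin n × Fin n → ℝ) (a b : Fin n × Fin n) : ℝ :=
  fN a * ( gH3 a b * hE b + gN b * hH1 a b - hH3 a b * gE b - hN b * gH1 a b )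
  - ( gH2 a b * hE b + gN b * hH3 b a - hH2 a b * gE b - hN b * gH3 b a ) * fE a

theorem jacobi_cancel (fE fN gE gN hE hN : Fin n × Fin n → ℝ)
    (fH1 fH2 fH3 gH1 gH2 gH3 hH1 hH2 hH3 : Fin n × Fin n → Fin n × Fin n → ℝ)
    (hf1 : ∀ a b, fH1 a b = fH1 b a) (hf2 : ∀ a b, fH2 a b = fH2 b a)
    (hg1 : ∀ a b, gH1 a b = gH1 b a) (hg2 : ∀ a b, gH2 a b = gH2 b a)
    (hh1 : ∀ a b, hH1 a b = hH1 b a) (hh2 : ∀ a b, hH2 a b = hH2 b a) :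
    ∑ a : Fin n × Fin n, ∑ b : Fin n × Fin n,
      (jterm fE fN gE gN hE hN gH1 gH2 gH3 hH1 hH2 hH3 a b
       + jterm gE gN hE hN fE fN hH1 hH2 hH3 fH1 fH2 fH3 a b
       + jterm hE hN fE fN gE gN fH1 fH2 fH3 gH1 gH2 gH3 a b) = 0 := by
  set S : (Fin n × Fin n) → (Fin n × Fin n) → ℝ := fun a b =>
      jterm fE fN gE gN hE hN gH1 gH2 gH3 hH1 hH2 hH3 a b
       + jterm gE gN hE hN fE fN hH1 hH2 hH3 fH1 fH2 fH3 a b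
       + jterm hE hN fE fN gE gN fH1 fH2 fH3 gH1 gH2 gH3 a b with hS
  have hswap : ∀ a b, S a b + S b a = 0 := by
    intro a b
    simp only [hS, jterm]
    rw [hf1 b a, hf2 b a, hg1 b a, hg2 b a, hh1 b a, hh2 b a]
    ring
  have h2 : (∑ a : Fin n × Fin n, ∑ b : Fin n × Fin n, S a b)
      + (∑ a : Fin n × Fin n, ∑ b : Fin n × Fin n, S a b) = 0 := by
    nth_rewrite 2 [Finset.sum_comm]
    simp only [← Finset.sum_add_distrib]
    exact Finset.sum_eq_zero fun a _ => Finset.sum_eq_zero fun b _ => hswap a b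
  linarith [h2]

theorem expand_jac (hf : SmoothFn f) (hg : SmoothFn g) (hh : SmoothFn h) (p : MM n) :
    pbracket 0 f (pbracket 0 g h) p = ∑ a : Fin n × Fin n, ∑ b : Fin n × Fin n,
      jterm (fun a => Dp f (εp a) p) (fun a => Dp f (ηp a) p)
        (fun a => Dp g (εp a) p) (fun a => Dp g (ηp a) p)
        (fun a => Dp h (εp a) p) (fun a => Dp h (ηp a) p)
        (fun a b => Hp g (εp a) (εp b) p) (fun a b => Hp g (ηp a) (ηp b) p)
        (fun a b => Hp g (εp a) (ηp b) p)
        (fun a b => Hp h (εp a) (εp b) p) (fun a b => Hp h (ηp a) (ηp b) p)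
        (fun a b => Hp h (εp a) (ηp b) p) a b := by
  rw [pbracket0_eq]
  refine Finset.sum_congr rfl fun a _ => ?_
  have e1 : Dp (pbracket 0 g h) (εp a) p = fderiv ℝ (pbracket 0 g h) p (εp a) := rfl
  have e2 : Dp (pbracket 0 g h) (ηp a) p = fderiv ℝ (pbracket 0 g h) p (ηp a) := rfl
  rw [e1, e2, fderiv_pbracket0 hg hh p (εp a), fderiv_pbracket0 hg hh p (ηp a),
    Finset.mul_sum, Finset.sum_mul, ← Finset.sum_sub_distrib]
  refine Finset.sum_congr rfl fun b _ => ?_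
  simp only [jterm]
  rw [Hp_symm hg (u := ηp b) (v := εp a), Hp_symm hh (u := εp b) (v := εp a),
    Hp_symm hh (u := ηp b) (v := εp a), Hp_symm hg (u := εp b) (v := εp a),
    Hp_symm hg (u := ηp b) (v := ηp a), Hp_symm hh (u := ηp b) (v := ηp a)]
  try ring

theorem jacobi0 (hf : SmoothFn f) (hg : SmoothFn g) (hh : SmoothFn h) (p : MM n) :
    pbracket 0 f (pbracket 0 g h) p + pbracket 0 g (pbracket 0 h f) p
      + pbracket 0 h (pbracket 0 f g) p = 0 := by
  rw [expand_jac hf hg hh p, expand_jac hg hh hf p, expand_jac hh hf hg p]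
  simp only [← Finset.sum_add_distrib]
  exact jacobi_cancel _ _ _ _ _ _ _ _ _ _ _ _ _ _ _
    (fun a b => Hp_symm hf) (fun a b => Hp_symm hf)
    (fun a b => Hp_symm hg) (fun a b => Hp_symm hg)
    (fun a b => Hp_symm hh) (fun a b => Hp_symm hh)

end mzero


section pullback

abbrev Mat (n : ℕ) := Matrix (Fin n) (Fin n) ℝ

theorem isBBM_mul : IsBoundedBilinearMap ℝ (fun x : Mat n × Mat n => x.1 * x.2) := by
  refine ⟨fun a b c => Matrix.add_mul a b c, fun r a b => Matrix.smul_mul r a b,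
    fun a b c => Matrix.mul_add a b c, fun r a b => Matrix.mul_smul a r b, ?_⟩
  refine ⟨(n : ℝ) + 1, by positivity, fun x y => ?_⟩
  rw [Matrix.norm_le_iff (by positivity)]
  intro i j
  calc ‖(x * y) i j‖ = |∑ k : Fin n, x i k * y k j| := rfl
    _ ≤ ∑ k : Fin n, |x i k * y k j| := Finset.abs_sum_le_sum_abs _ _
    _ ≤ ∑ _k : Fin n, ‖x‖ * ‖y‖ := by
        refine Finset.sum_le_sum fun k _ => ?_
        rw [abs_mul]
        exact mul_le_mul (Matrix.norm_entry_le_entrywise_sup_norm x)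
          (Matrix.norm_entry_le_entrywise_sup_norm y) (abs_nonneg _) (norm_nonneg _)
    _ = (n : ℝ) * (‖x‖ * ‖y‖) := by simp [Finset.sum_const, nsmul_eq_mul]
    _ ≤ ((n : ℝ) + 1) * ‖x‖ * ‖y‖ := by
        rw [mul_assoc]
        exact mul_le_mul_of_nonneg_right (by linarith) (by positivity)

noncomputable def mulLC (A : Mat n) : Mat n →L[ℝ] Mat n :=
  (LinearMap.mulLeft ℝ A).toContinuousLinearMap
noncomputable def mulRC (A : Mat n) : Mat n →L[ℝ] Mat n :=
  (LinearMap.mulRight ℝ A).toContinuousLinearMap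

@[simp] theorem mulLC_apply (A U : Mat n) : mulLC A U = A * U := rfl
@[simp] theorem mulRC_apply (A U : Mat n) : mulRC A U = U * A := rfl

theorem hasFDerivAt_matmul {A B : MM n → Mat n} {A' B' : MM n →L[ℝ] Mat n} {p : MM n}
    (hA : HasFDerivAt A A' p) (hB : HasFDerivAt B B' p) :
    HasFDerivAt (fun q => A q * B q) ((mulRC (B p)).comp A' + (mulLC (A p)).comp B') p := by
  have h := ((isBBM_mul (n := n)).hasFDerivAt (A p, B p)).comp p (hA.prodMk hB)
  refine h.congr_fderiv (Eq.symm ?_)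
  refine ContinuousLinearMap.ext fun w => ?_
  show _ = (isBBM_mul (n := n)).deriv (A p, B p) (A' w, B' w)
  rw [IsBoundedBilinearMap.deriv_apply]
  simp only [ContinuousLinearMap.add_apply, ContinuousLinearMap.coe_comp', Function.comp_apply,
    mulRC_apply, mulLC_apply]
  exact add_comm _ _

noncomputable def powD (m : ℕ) (p : MM n) : MM n →L[ℝ] Mat n :=
  ∑ k ∈ Finset.range m,
    (mulLC (p.1 ^ k)).comp ((mulRC (p.1 ^ (m - 1 - k))).comp
      (ContinuousLinearMap.fst ℝ (Mat n) (Mat n)))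

theorem powD_apply (m : ℕ) (p : MM n) (w : MM n) :
    powD m p w = ∑ k ∈ Finset.range m, p.1 ^ k * w.1 * p.1 ^ (m - 1 - k) := by
  rw [powD, ContinuousLinearMap.sum_apply]
  exact Finset.sum_congr rfl fun k _ => by simp [mul_assoc]

theorem hasFDerivAt_Xpow (m : ℕ) (p : MM n) :
    HasFDerivAt (fun q : MM n => q.1 ^ m) (powD m p) p := by
  induction m with
  | zero =>
      have : (fun q : MM n => q.1 ^ 0) = fun _ => (1 : Mat n) := by funext q; rw [pow_zero]
      rw [this]
      have h0 : powD 0 p = 0 := by simp [powD]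
      rw [h0]
      exact hasFDerivAt_const 1 p
  | succ m ih =>
      have : (fun q : MM n => q.1 ^ (m+1)) = fun q => q.1 ^ m * q.1 := by
        funext q; rw [pow_succ]
      rw [this]
      have h := hasFDerivAt_matmul (p := p) ih (hasFDerivAt_fst)
      convert h using 1
      refine ContinuousLinearMap.ext fun w => ?_
      simp only [ContinuousLinearMap.add_apply, ContinuousLinearMap.coe_comp', Function.comp_apply,
        mulRC_apply, mulLC_apply, ContinuousLinearMap.coe_fst', powD_apply]
      rw [Finset.sum_mul, Finset.sum_range_succ]
      congr 1
      · refine Finset.sum_congr rfl fun k hk => ?_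
        have hk' : k < m := Finset.mem_range.mp hk
        have he : m + 1 - 1 - k = m - 1 - k + 1 := by omega
        rw [he, mul_assoc, mul_assoc, ← pow_succ, mul_assoc]
      · simp [Nat.sub_self]
        rfl


/-- the map `Φ(X,Y) = (X, Y Xᵐ)` -/
def Phi (m : ℕ) : MM n → MM n := fun q => (q.1, q.2 * q.1 ^ m)

noncomputable def phiD (m : ℕ) (p : MM n) : MM n →L[ℝ] MM n :=
  (ContinuousLinearMap.fst ℝ (Mat n) (Mat n)).prod
    ((mulRC (p.1 ^ m)).comp (ContinuousLinearMap.snd ℝ (Mat n) (Mat n))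
      + (mulLC p.2).comp (powD m p))

theorem hasFDerivAt_Phi (m : ℕ) (p : MM n) : HasFDerivAt (Phi (n := n) m) (phiD m p) p := by
  refine HasFDerivAt.prodMk hasFDerivAt_fst ?_
  exact hasFDerivAt_matmul hasFDerivAt_snd (hasFDerivAt_Xpow m p)

theorem phiD_apply (m : ℕ) (p w : MM n) :
    phiD m p w = (w.1, w.2 * p.1 ^ m + p.2 * powD m p w) := by
  simp [phiD]

theorem contDiff_Phi (m : ℕ) : ContDiff ℝ (⊤:ℕ∞) (Phi (n := n) m) :=
  ContDiff.prodMk contDiff_fst (contDiff_matmul contDiff_snd (contDiff_Xpow m))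

theorem trace_mul_std (M : Mat n) (i j : Fin n) :
    (M * Matrix.single j i 1).trace = M i j := by
  rw [trace_of_mul]
  simp [Matrix.single, Matrix.of_apply, ite_and, Finset.sum_ite_eq]

theorem fderiv_comp_Phi {f : MM n → ℝ} {m : ℕ} {p : MM n}
    (hf : DifferentiableAt ℝ f (Phi m p)) :
    fderiv ℝ (f ∘ Phi m) p = (fderiv ℝ f (Phi m p)).comp (phiD m p) :=
  (hf.hasFDerivAt.comp p (hasFDerivAt_Phi m p)).fderiv

theorem gradY_comp {f : MM n → ℝ} {m : ℕ} {p : MM n}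
    (hf : DifferentiableAt ℝ f (Phi m p)) :
    gradY (f ∘ Phi m) p = p.1 ^ m * gradY f (Phi m p) := by
  ext i j
  show fderiv ℝ (f ∘ Phi m) p (0, Matrix.single j i 1) = _
  rw [fderiv_comp_Phi hf, ContinuousLinearMap.comp_apply, phiD_apply]
  have hw : powD m p ((0 : Mat n), Matrix.single j i 1) = 0 := by
    rw [powD_apply]
    exact Finset.sum_eq_zero fun k _ => by simp
  rw [hw, mul_zero, add_zero]
  rw [fderiv_eq_trace]
  simp only [Matrix.mul_zero, Matrix.trace_zero, zero_add]
  rw [show gradY f (Phi m p) * (Matrix.single j i 1 * p.1 ^ m)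
      = (gradY f (Phi m p) * Matrix.single j i 1) * p.1 ^ m from by noncomm_ring,
    Matrix.trace_mul_comm, ← mul_assoc, trace_mul_std]

theorem gradX_comp {f : MM n → ℝ} {m : ℕ} {p : MM n}
    (hf : DifferentiableAt ℝ f (Phi m p)) :
    gradX (f ∘ Phi m) p = gradX f (Phi m p)
      + ∑ k ∈ Finset.range m, p.1 ^ (m-1-k) * gradY f (Phi m p) * p.2 * p.1 ^ k := by
  ext i j
  show fderiv ℝ (f ∘ Phi m) p (Matrix.single j i 1, 0) = _
  rw [fderiv_comp_Phi hf, ContinuousLinearMap.comp_apply, phiD_apply]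
  rw [fderiv_eq_trace]
  simp only [Matrix.zero_mul, zero_add]
  rw [trace_mul_std, powD_apply]
  simp only
  rw [Matrix.mul_sum, Matrix.mul_sum, Matrix.trace_sum]
  rw [Matrix.add_apply, Matrix.sum_apply]
  congr 1
  refine Finset.sum_congr rfl fun k _ => ?_
  rw [show gradY f (Phi m p) * (p.2 * (p.1 ^ k * Matrix.single j i 1 * p.1 ^ (m-1-k)))
      = (gradY f (Phi m p) * p.2 * p.1 ^ k * Matrix.single j i 1) * p.1 ^ (m-1-k)
      from by noncomm_ring, Matrix.trace_mul_comm,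
    show p.1 ^ (m-1-k) * (gradY f (Phi m p) * p.2 * p.1 ^ k * Matrix.single j i 1)
      = (p.1 ^ (m-1-k) * gradY f (Phi m p) * p.2 * p.1 ^ k) * Matrix.single j i 1
      from by noncomm_ring, trace_mul_std]


theorem trace_cyc (P Q K Y B D : Mat n) (hc : K * P = P * K) :
    (P * B * (Q * D * Y * K)).trace = (Y * P * K * (B * Q * D)).trace := by
  rw [show P * B * (Q * D * Y * K) = (P * (B * (Q * D))) * (Y * K) from by noncomm_ring,
    Matrix.trace_mul_comm,
    show Y * K * (P * (B * (Q * D))) = (Y * (K * P)) * (B * (Q * D)) from by noncomm_ring,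
    hc]
  congr 1
  noncomm_ring

theorem key_trace (m : ℕ) (X Y A B C D : Mat n) :
    ((X^m * B) * (C + ∑ k ∈ Finset.range m, X^(m-1-k) * D * Y * X^k)
      - (X^m * D) * (A + ∑ k ∈ Finset.range m, X^(m-1-k) * B * Y * X^k)).trace
    = (X^m * (B*C - D*A)).trace
      + ∑ i ∈ Finset.range m, ((Y*X^m) * X^(m-1-i) * (B * X^i * D - D * X^i * B)).trace := by
  rw [← Finset.sum_range_reflect
    (fun i => ((Y*X^m) * X^(m-1-i) * (B * X^i * D - D * X^i * B)).trace) m]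
  simp only [Matrix.mul_add, Matrix.mul_sum, Matrix.trace_sub, Matrix.trace_add,
    Matrix.trace_sum, Matrix.mul_sub]
  rw [Finset.sum_congr rfl (fun k hk => show
      ((X^m * B) * (X^(m-1-k) * D * Y * X^k)).trace
        = ((Y*X^m) * X^k * (B * X^(m-1-k) * D)).trace from
    trace_cyc (X^m) (X^(m-1-k)) (X^k) Y B D (pow_mul_comm X k m))]
  rw [Finset.sum_congr rfl (fun k hk => show
      ((X^m * D) * (X^(m-1-k) * B * Y * X^k)).trace
        = ((Y*X^m) * X^k * (D * X^(m-1-k) * B)).trace from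
    trace_cyc (X^m) (X^(m-1-k)) (X^k) Y D B (pow_mul_comm X k m))]
  rw [Finset.sum_congr rfl (fun k hk => show
      ((Y*X^m) * X^(m-1-(m-1-k)) * (B * X^(m-1-k) * D)).trace
        - ((Y*X^m) * X^(m-1-(m-1-k)) * (D * X^(m-1-k) * B)).trace
        = ((Y*X^m) * X^k * (B * X^(m-1-k) * D)).trace
          - ((Y*X^m) * X^k * (D * X^(m-1-k) * B)).trace from by
    have : m-1-(m-1-k) = k := by
      have := Finset.mem_range.mp hk; omega
    rw [this])]
  rw [mul_assoc (X^m) B C, mul_assoc (X^m) D A, Finset.sum_sub_distrib]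
  ring

theorem pullback_bracket {f g : MM n → ℝ} {m : ℕ} {p : MM n}
    (hf : DifferentiableAt ℝ f (Phi m p)) (hg : DifferentiableAt ℝ g (Phi m p)) :
    pbracket 0 (f ∘ Phi m) (g ∘ Phi m) p = pbracket m f g (Phi m p) := by
  unfold pbracket
  rw [pow_zero, one_mul, Finset.range_zero, Finset.sum_empty, add_zero]
  rw [gradX_comp hf, gradX_comp hg, gradY_comp hf, gradY_comp hg]
  have h1 : (Phi m p).1 = p.1 := rfl
  have h2 : (Phi m p).2 = p.2 * p.1 ^ m := rfl
  rw [h1, h2]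
  have := key_trace m p.1 p.2 (gradX f (Phi m p)) (gradY f (Phi m p))
    (gradX g (Phi m p)) (gradY g (Phi m p))
  rw [this]

end pullback


section density

open Polynomial

theorem det_add_smul_one (A : Mat n) (t : ℝ) :
    ((-A).charpoly).eval t = (A + t • (1 : Mat n)).det := by
  rw [Matrix.charpoly]
  rw [show eval t (Matrix.charmatrix (-A)).det = (evalRingHom t) (Matrix.charmatrix (-A)).det
    from rfl, RingHom.map_det]
  congr 1
  ext i j
  by_cases hij : i = j
  · subst hij
    simp [Matrix.charmatrix_apply_eq, Matrix.add_apply, Matrix.smul_apply, Matrix.one_apply]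
    ring
  · simp [Matrix.charmatrix_apply_ne _ _ _ hij, Matrix.add_apply, Matrix.smul_apply,
      Matrix.one_apply_ne hij]

theorem dense_unit_det : Dense {p : MM n | IsUnit p.1.det} := by
  erw [Metric.dense_iff]
  intro p r hr
  set δ : ℝ := r / (‖(1 : Mat n)‖ + 1) with hδ
  have hδpos : 0 < δ := by positivity
  have hroots : {t : ℝ | ((-p.1).charpoly).IsRoot t}.Finite :=
    Polynomial.finite_setOf_isRoot ((Matrix.charpoly_monic _).ne_zero)
  have hinf : (Set.Ioo (0:ℝ) δ).Infinite :=
    Set.infinite_coe_iff.mp (Set.Ioo.infinite hδpos)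
  obtain ⟨t, ht⟩ := (hinf.diff hroots).nonempty
  obtain ⟨htIoo, htroot⟩ := ht
  refine ⟨(p.1 + t • 1, p.2), ?_, ?_⟩
  · rw [Metric.mem_ball]
    have : dist ((p.1 + t • 1, p.2) : MM n) p = dist (p.1 + t • 1) p.1 := by
      rw [Prod.dist_eq]
      simp [dist_self]
    rw [this, dist_eq_norm]
    have h1 : p.1 + t • 1 - p.1 = t • (1 : Mat n) := by abel
    rw [h1, norm_smul]
    have h2 : ‖t‖ < δ := by
      rw [Real.norm_eq_abs, abs_of_pos htIoo.1]; exact htIoo.2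
    have h3 : δ * (‖(1 : Mat n)‖ + 1) = r := by
      rw [hδ, div_mul_cancel₀]
      positivity
    nlinarith [norm_nonneg (1 : Mat n), norm_nonneg t, hδpos]
  · show IsUnit (p.1 + t • 1).det
    rw [isUnit_iff_ne_zero, ← det_add_smul_one]
    exact fun hzero => htroot hzero

end density


section jacobi

variable {m : ℕ} {f g h : MM n → ℝ}

theorem smooth_diffAt {f : MM n → ℝ} (hf : SmoothFn f) (x : MM n) :
    DifferentiableAt ℝ f x :=
  (hf.differentiable (by simp)) x

theorem smooth_comp_Phi {f : MM n → ℝ} (hf : SmoothFn f) (m : ℕ) :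
    SmoothFn (f ∘ Phi m) := hf.comp (contDiff_Phi m)

theorem jacobi_unit (hf : SmoothFn f) (hg : SmoothFn g) (hh : SmoothFn h)
    {p : MM n} (hp : IsUnit p.1.det) :
    pbracket m f (pbracket m g h) p + pbracket m g (pbracket m h f) p
      + pbracket m h (pbracket m f g) p = 0 := by
  set q : MM n := (p.1, p.2 * (p.1⁻¹) ^ m) with hq
  have key : ∀ k : ℕ, (p.1⁻¹) ^ k * p.1 ^ k = 1 := by
    intro k
    induction k with
    | zero => simp
    | succ k ih =>
        rw [pow_succ, pow_succ']
        rw [show p.1⁻¹ ^ k * p.1⁻¹ * (p.1 * p.1 ^ k)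
          = p.1⁻¹ ^ k * (p.1⁻¹ * p.1) * p.1 ^ k from by noncomm_ring]
        rw [Matrix.nonsing_inv_mul _ hp, mul_one, ih]
  have hPhi : Phi m q = p := by
    unfold Phi
    have h2 : q.2 * q.1 ^ m = p.2 := by
      show p.2 * p.1⁻¹ ^ m * p.1 ^ m = p.2
      rw [mul_assoc, key m, mul_one]
    rw [h2]
  have e1 : (pbracket m g h) ∘ (Phi m) = pbracket 0 (g ∘ Phi m) (h ∘ Phi m) :=
    funext fun q' => (pullback_bracket (smooth_diffAt hg _) (smooth_diffAt hh _)).symm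
  have e2 : (pbracket m h f) ∘ (Phi m) = pbracket 0 (h ∘ Phi m) (f ∘ Phi m) :=
    funext fun q' => (pullback_bracket (smooth_diffAt hh _) (smooth_diffAt hf _)).symm
  have e3 : (pbracket m f g) ∘ (Phi m) = pbracket 0 (f ∘ Phi m) (g ∘ Phi m) :=
    funext fun q' => (pullback_bracket (smooth_diffAt hf _) (smooth_diffAt hg _)).symm
  have t1 : pbracket m f (pbracket m g h) p
      = pbracket 0 (f ∘ Phi m) (pbracket 0 (g ∘ Phi m) (h ∘ Phi m)) q := by
    conv_lhs => rw [← hPhi]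
    rw [← pullback_bracket (smooth_diffAt hf _)
      (smooth_diffAt (pbracket_smooth hg hh) _), e1]
  have t2 : pbracket m g (pbracket m h f) p
      = pbracket 0 (g ∘ Phi m) (pbracket 0 (h ∘ Phi m) (f ∘ Phi m)) q := by
    conv_lhs => rw [← hPhi]
    rw [← pullback_bracket (smooth_diffAt hg _)
      (smooth_diffAt (pbracket_smooth hh hf) _), e2]
  have t3 : pbracket m h (pbracket m f g) p
      = pbracket 0 (h ∘ Phi m) (pbracket 0 (f ∘ Phi m) (g ∘ Phi m)) q := by
    conv_lhs => rw [← hPhi]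
    rw [← pullback_bracket (smooth_diffAt hh _)
      (smooth_diffAt (pbracket_smooth hf hg) _), e3]
  rw [t1, t2, t3]
  exact jacobi0 (smooth_comp_Phi hf m) (smooth_comp_Phi hg m) (smooth_comp_Phi hh m) q

theorem jacobi_all (hf : SmoothFn f) (hg : SmoothFn g) (hh : SmoothFn h) (p : MM n) :
    pbracket m f (pbracket m g h) p + pbracket m g (pbracket m h f) p
      + pbracket m h (pbracket m f g) p = 0 := by
  have hcont : Continuous (fun p : MM n => pbracket m f (pbracket m g h) p
      + pbracket m g (pbracket m h f) p + pbracket m h (pbracket m f g) p) := by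
    have c1 := (pbracket_smooth (m := m) hf (pbracket_smooth (m := m) hg hh)).continuous
    have c2 := (pbracket_smooth (m := m) hg (pbracket_smooth (m := m) hh hf)).continuous
    have c3 := (pbracket_smooth (m := m) hh (pbracket_smooth (m := m) hf hg)).continuous
    exact (c1.add c2).add c3
  have hzero := Continuous.ext_on dense_unit_det hcont continuous_const
    (fun p hp => jacobi_unit hf hg hh hp)
  exact congrFun hzero p

end jacobi

end CMaux

/-- For every `m ≥ 0`, the bracket `{·,·}_m` is a Poisson bracket on smooth functions:
ℝ-bilinear, antisymmetric, a derivation in each argument, and satisfying the Jacobi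
identity. -/
theorem pbracket_isPoisson (n : ℕ) (hn : 1 ≤ n) (m : ℕ) :
    (∀ (a b : ℝ) (f f' g : MM n → ℝ), SmoothFn f → SmoothFn f' → SmoothFn g →
      ∀ p, pbracket m (fun q => a * f q + b * f' q) g p =
        a * pbracket m f g p + b * pbracket m f' g p) ∧
    (∀ (a b : ℝ) (f g g' : MM n → ℝ), SmoothFn f → SmoothFn g → SmoothFn g' →
      ∀ p, pbracket m f (fun q => a * g q + b * g' q) p =
        a * pbracket m f g p + b * pbracket m f g' p) ∧
    (∀ (f g : MM n → ℝ), SmoothFn f → SmoothFn g →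
      ∀ p, pbracket m f g p = - pbracket m g f p) ∧
    (∀ (f g h : MM n → ℝ), SmoothFn f → SmoothFn g → SmoothFn h →
      ∀ p, pbracket m (fun q => f q * g q) h p =
        f p * pbracket m g h p + g p * pbracket m f h p) ∧
    (∀ (f g h : MM n → ℝ), SmoothFn f → SmoothFn g → SmoothFn h →
      ∀ p, pbracket m f (fun q => g q * h q) p =
        g p * pbracket m f h p + h p * pbracket m f g p) ∧
    (∀ (f g h : MM n → ℝ), SmoothFn f → SmoothFn g → SmoothFn h →
      ∀ p, pbracket m f (pbracket m g h) p + pbracket m g (pbracket m h f) p +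
        pbracket m h (pbracket m f g) p = 0) := by
  refine ⟨?_, ?_, ?_, ?_, ?_, ?_⟩
  · intro a b f f' g hf hf' hg p
    exact CMaux.pbracket_combo_left
      (CMaux.gradX_combo a b (CMaux.smooth_diffAt hf p) (CMaux.smooth_diffAt hf' p))
      (CMaux.gradY_combo a b (CMaux.smooth_diffAt hf p) (CMaux.smooth_diffAt hf' p))
  · intro a b f g g' hf hg hg' p
    rw [CMaux.pbracket_antisymm m f _ p,
      CMaux.pbracket_combo_left
        (CMaux.gradX_combo a b (CMaux.smooth_diffAt hg p) (CMaux.smooth_diffAt hg' p))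
        (CMaux.gradY_combo a b (CMaux.smooth_diffAt hg p) (CMaux.smooth_diffAt hg' p)),
      CMaux.pbracket_antisymm m g f p, CMaux.pbracket_antisymm m g' f p]
    ring
  · intro f g _ _ p
    exact CMaux.pbracket_antisymm m f g p
  · intro f g h hf hg hh p
    exact CMaux.pbracket_combo_left
      (CMaux.gradX_mul (CMaux.smooth_diffAt hf p) (CMaux.smooth_diffAt hg p))
      (CMaux.gradY_mul (CMaux.smooth_diffAt hf p) (CMaux.smooth_diffAt hg p))
  · intro f g h hf hg hh p
    rw [CMaux.pbracket_antisymm m f _ p,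
      CMaux.pbracket_combo_left
        (CMaux.gradX_mul (CMaux.smooth_diffAt hg p) (CMaux.smooth_diffAt hh p))
        (CMaux.gradY_mul (CMaux.smooth_diffAt hg p) (CMaux.smooth_diffAt hh p)),
      CMaux.pbracket_antisymm m g f p, CMaux.pbracket_antisymm m h f p]
    ring
  · intro f g h hf hg hh p
    exact CMaux.jacobi_all hf hg hh p
end

section
/- The Calogero-Moser Hamiltonians form a Lenard chain with respect to the first two brackets of the hierarchy: for every integer k ≥ 1 and every smooth function g : M → ℝ, one has {Î_k, g}_1 = {Î_{k+1}, g}_0 identically on M (that is, the Hamiltonian vector field of Î_k with respect to the second Poisson structure coincides with the Hamiltonian vector field of Î_{k+1} with respect to the canonical one). -/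
attribute [local instance] Matrix.normedAddCommGroup Matrix.normedSpace

/-- The Calogero-Moser Hamiltonian `Î_k(X,Y) = (1/k) tr(X^k)`. -/
noncomputable def Ihat {n : ℕ} (k : ℕ) (p : MM n) : ℝ := (1 / (k : ℝ)) * (p.1 ^ k).trace

abbrev Mat (n : ℕ) := Matrix (Fin n) (Fin n) ℝ

noncomputable def lrmul {n : ℕ} (A B : Mat n) : Mat n →L[ℝ] Mat n :=
  LinearMap.toContinuousLinearMap
    ((LinearMap.mulRight ℝ B).comp (LinearMap.mulLeft ℝ A))

@[simp] lemma lrmul_apply {n : ℕ} (A B U : Mat n) : lrmul A B U = A * U * B := rfl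

noncomputable def mulCLM (n : ℕ) : Mat n →L[ℝ] Mat n →L[ℝ] Mat n :=
  LinearMap.toContinuousLinearMap
    { toFun := fun A => LinearMap.toContinuousLinearMap (LinearMap.mulLeft ℝ A)
      map_add' := by intros; ext; simp [add_mul]
      map_smul' := by intros; ext; simp }

lemma hasFDerivAt_mul {n : ℕ} {E : Type*} [NormedAddCommGroup E] [NormedSpace ℝ E]
    {f g : E → Mat n} {f' g' : E →L[ℝ] Mat n} {x : E}
    (hf : HasFDerivAt f f' x) (hg : HasFDerivAt g g' x) :
    HasFDerivAt (fun y => f y * g y)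
      ((lrmul 1 (g x)).comp f' + (lrmul (f x) 1).comp g') x := by
  have hb : IsBoundedBilinearMap ℝ (fun p : Mat n × Mat n => p.1 * p.2) := by
    have := (mulCLM n).isBoundedBilinearMap
    exact this
  have h := (hb.hasFDerivAt (f x, g x)).comp x (hf.prodMk hg)
  refine h.congr_fderiv ?_
  refine ContinuousLinearMap.ext fun u => ?_
  rw [ContinuousLinearMap.comp_apply, hb.deriv_apply]
  change f x * g' u + f' u * g x = 1 * f' u * g x + f x * g' u * 1
  simp [add_comm]

lemma hasFDerivAt_matPow {n : ℕ} (k : ℕ) (X : Mat n) :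
    HasFDerivAt (fun A : Mat n => A ^ k)
      (∑ i ∈ Finset.range k, lrmul (X ^ i) (X ^ (k - 1 - i))) X := by
  induction k with
  | zero => simpa using hasFDerivAt_const (1 : Mat n) X
  | succ k ih =>
    have h := hasFDerivAt_mul ih (hasFDerivAt_id X)
    simp only [id_eq] at h
    have heq : (fun A : Mat n => A ^ k * A) = fun A : Mat n => A ^ (k + 1) := by
      funext A; rw [← pow_succ]
    rw [heq] at h
    refine h.congr_fderiv (Eq.symm ?_)
    refine ContinuousLinearMap.ext fun u => ?_
    change _ = lrmul 1 X ((∑ i ∈ Finset.range k, lrmul (X ^ i) (X ^ (k - 1 - i))) u) + lrmul (X ^ k) 1 u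
    simp only [ContinuousLinearMap.add_apply, ContinuousLinearMap.coe_comp',
      Function.comp_apply, ContinuousLinearMap.coe_sum', Finset.sum_apply, lrmul_apply,
      ContinuousLinearMap.coe_id', id_eq, one_mul, mul_one, Finset.sum_range_succ,
      Nat.sub_self, pow_zero]
    rw [Finset.sum_mul, show k + 1 - 1 - k = 0 by omega, pow_zero, mul_one]
    congr 1
    refine Finset.sum_congr rfl fun i hi => ?_
    have hik : k + 1 - 1 - i = k - i := by omega
    have h2 : k - 1 - i + 1 = k - i := by have := Finset.mem_range.mp hi; omega
    rw [hik, mul_assoc (X ^ i * u) (X ^ (k - 1 - i)) X, ← pow_succ, h2]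

noncomputable def traceCLM (n : ℕ) : Mat n →L[ℝ] ℝ :=
  LinearMap.toContinuousLinearMap (Matrix.traceLinearMap (Fin n) ℝ ℝ)

noncomputable def IhatD {n : ℕ} (k : ℕ) (p : MM n) : MM n →L[ℝ] ℝ :=
  (1 / (k : ℝ)) • ((traceCLM n).comp
    ((∑ i ∈ Finset.range k, lrmul (p.1 ^ i) (p.1 ^ (k - 1 - i))).comp
      (ContinuousLinearMap.fst ℝ (Mat n) (Mat n))))

lemma hasFDerivAt_Ihat {n : ℕ} (k : ℕ) (p : MM n) :
    HasFDerivAt (fun p : MM n => (1 / (k : ℝ)) * (p.1 ^ k).trace) (IhatD k p) p := by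
  have h1 : HasFDerivAt (fun p : MM n => p.1)
      (ContinuousLinearMap.fst ℝ (Mat n) (Mat n)) p := hasFDerivAt_fst
  have h2 := (hasFDerivAt_matPow k p.1).comp p h1
  have h3 := ((traceCLM n).hasFDerivAt).comp p h2
  have h4 := h3.const_mul (1 / (k : ℝ))
  exact h4

lemma trace_mul_stdBasis {n : ℕ} (A : Mat n) (i j : Fin n) :
    (A * Matrix.single j i 1).trace = A i j := by
  simp [Matrix.trace, Matrix.diag, Matrix.mul_apply, Matrix.single,
    Finset.sum_ite_eq, ite_and]

lemma fderiv_Ihat {n : ℕ} (k : ℕ) (p : MM n) :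
    fderiv ℝ (Ihat k : MM n → ℝ) p = IhatD k p := by
  exact (hasFDerivAt_Ihat k p).fderiv

lemma gradY_Ihat {n : ℕ} (k : ℕ) (p : MM n) : gradY (Ihat k) p = 0 := by
  funext i j
  simp [gradY, fderiv_Ihat, IhatD]

lemma gradX_Ihat {n : ℕ} (k : ℕ) (hk : 1 ≤ k) (p : MM n) :
    gradX (Ihat k) p = p.1 ^ (k - 1) := by
  funext i j
  simp only [gradX, fderiv_Ihat, IhatD, ContinuousLinearMap.smul_apply,
    ContinuousLinearMap.comp_apply, ContinuousLinearMap.coe_fst',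
    ContinuousLinearMap.coe_sum', Finset.sum_apply, lrmul_apply, map_sum,
    smul_eq_mul]
  have key : ∀ m ∈ Finset.range k,
      (traceCLM n) (p.1 ^ m * Matrix.single j i 1 * p.1 ^ (k - 1 - m))
        = (p.1 ^ (k - 1)) i j := by
    intro m hm
    have hm' := Finset.mem_range.mp hm
    show (p.1 ^ m * Matrix.single j i 1 * p.1 ^ (k - 1 - m)).trace = _
    rw [Matrix.trace_mul_comm, ← mul_assoc, ← pow_add,
      show k - 1 - m + m = k - 1 by omega, trace_mul_stdBasis]
  rw [Finset.sum_congr rfl key, Finset.sum_const, Finset.card_range, nsmul_eq_mul,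
    ← mul_assoc, one_div, inv_mul_cancel₀ (by positivity : (k : ℝ) ≠ 0), one_mul]


/-- The Hamiltonians `Î_k` form a Lenard chain with respect to the first two brackets of
the hierarchy: `{Î_k, g}_1 = {Î_{k+1}, g}_0` for every smooth `g` and every `k ≥ 1`. -/
theorem Ihat_lenardChain (n : ℕ) (hn : 1 ≤ n) (k : ℕ) (hk : 1 ≤ k)
    (g : MM n → ℝ) (hg : SmoothFn g) :
    ∀ p : MM n, pbracket 1 (Ihat k) g p = pbracket 0 (Ihat (k + 1)) g p := by
  intro p
  have hk1 : 1 ≤ k + 1 := by omega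
  rw [pbracket, pbracket, gradY_Ihat, gradY_Ihat, gradX_Ihat k hk, gradX_Ihat (k+1) hk1]
  simp only [Finset.range_zero, Finset.sum_empty, Finset.sum_range_one, zero_mul,
    mul_zero, zero_sub, pow_zero, pow_one, sub_zero, add_zero, Nat.add_sub_cancel,
    Matrix.mul_zero, Matrix.zero_mul, zero_sub, Matrix.trace_neg, one_mul, sub_self,
    Matrix.trace_zero]
  rw [Matrix.trace_mul_comm, neg_mul, Matrix.trace_neg, mul_assoc, ← pow_succ,
    show k - 1 + 1 = k from by omega]
end

section
/- For all integers k, ℓ ≥ 1 and m ≥ 0 with k+ℓ+m ≥ 3, one has {Ĵ_k, Ĵ_ℓ}_m = (ℓ−k) Ĵ_{k+ℓ+m−2}, i.e. {Ĵ_k, Ĵ_ℓ}_m(X,Y) = (ℓ−k) tr(X^{k+ℓ+m−3} Y) for all (X,Y) ∈ M; moreover {Ĵ_1, Ĵ_1}_0 = 0. In particular the functions Î_k and Ĵ_ℓ span a Lie subalgebra with respect to each bracket of the hierarchy. -/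
attribute [local instance] Matrix.normedAddCommGroup Matrix.normedSpace

/-- The Hamiltonian `Ĵ_ℓ(X,Y) = tr(X^{ℓ−1} Y)`. -/
noncomputable def Jhat {n : ℕ} (l : ℕ) (p : MM n) : ℝ := (p.1 ^ (l - 1) * p.2).trace

namespace CMaux

variable {n : ℕ}

local notation "Mat" => Matrix (Fin n) (Fin n) ℝ

/-- Matrix multiplication as a continuous bilinear map. -/
noncomputable def mulL (n : ℕ) :
    Matrix (Fin n) (Fin n) ℝ →L[ℝ] Matrix (Fin n) (Fin n) ℝ →L[ℝ] Matrix (Fin n) (Fin n) ℝ :=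
  LinearMap.toContinuousLinearMap
  { toFun := fun A => LinearMap.toContinuousLinearMap (LinearMap.mulLeft ℝ A)
    map_add' := by intro A B; ext C : 1; simp [add_mul]
    map_smul' := by intro r A; ext C : 1; simp [smul_mul_assoc] }

@[simp] lemma mulL_apply (A B : Mat) : mulL n A B = A * B := rfl

/-- Trace as a continuous linear map. -/
noncomputable def traceL (n : ℕ) : Matrix (Fin n) (Fin n) ℝ →L[ℝ] ℝ :=
  LinearMap.toContinuousLinearMap (Matrix.traceLinearMap (Fin n) ℝ ℝ)

@[simp] lemma traceL_apply (A : Mat) : traceL n A = A.trace := rfl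

/-- Derivative of `q ↦ q.1 ^ a`. -/
noncomputable def Dpow (a : ℕ) (p : MM n) : MM n →L[ℝ] Matrix (Fin n) (Fin n) ℝ :=
  ∑ i ∈ Finset.range a,
    (mulL n (p.1 ^ i)).comp (((mulL n).flip (p.1 ^ (a - 1 - i))).comp
      (ContinuousLinearMap.fst ℝ Mat Mat))

lemma Dpow_apply (a : ℕ) (p w : MM n) :
    Dpow a p w = ∑ i ∈ Finset.range a, p.1 ^ i * (w.1 * p.1 ^ (a - 1 - i)) := by
  simp [Dpow]
  rfl

lemma hasFDerivAt_pow (a : ℕ) (p : MM n) :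
    HasFDerivAt (fun q : MM n => q.1 ^ a) (Dpow a p) p := by
  induction a with
  | zero =>
      simpa [Dpow] using (hasFDerivAt_const (1 : Mat) p)
  | succ a ih =>
      have h := (mulL n).hasFDerivAt_of_bilinear (hasFDerivAt_fst (p := p)) ih
      have : (fun q : MM n => mulL n q.1 (q.1 ^ a)) = fun q : MM n => q.1 ^ (a + 1) := by
        funext q; exact (pow_succ' q.1 a).symm
      erw [this] at h
      refine h.congr_fderiv ?_
      symm
      apply ContinuousLinearMap.ext
      intro w
      show Dpow (a + 1) p w = p.1 * Dpow a p w + w.1 * p.1 ^ a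
      simp only [ContinuousLinearMap.add_apply, ContinuousLinearMap.precompR_apply,
        ContinuousLinearMap.precompL_apply, ContinuousLinearMap.coe_fst', mulL_apply,
        ContinuousLinearMap.compL_apply, ContinuousLinearMap.coe_comp', Function.comp_apply,
        Dpow_apply]
      rw [Finset.sum_range_succ', Finset.mul_sum]
      simp only [Nat.sub_zero, pow_zero, one_mul, Nat.add_sub_cancel]
      congr 1
      apply Finset.sum_congr rfl
      intro i hi
      have h2 : a - (i + 1) = a - 1 - i := by omega
      rw [h2]; simp only [pow_succ', mul_assoc]


/-- Derivative of `q ↦ tr(q.1 ^ a * q.2)`. -/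
noncomputable def DJ (a : ℕ) (p : MM n) : MM n →L[ℝ] ℝ :=
  (traceL n).comp
    ((ContinuousLinearMap.precompR (MM n) (mulL n) (p.1 ^ a)
        (ContinuousLinearMap.snd ℝ Mat Mat)) +
     (ContinuousLinearMap.precompL (MM n) (mulL n) (Dpow a p) p.2))

lemma DJ_apply (a : ℕ) (p w : MM n) :
    DJ a p w = (p.1 ^ a * w.2).trace +
      ((∑ i ∈ Finset.range a, p.1 ^ i * (w.1 * p.1 ^ (a - 1 - i))) * p.2).trace := by
  erw [DJ, ContinuousLinearMap.comp_apply, map_add]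
  show (p.1 ^ a * w.2).trace + (Dpow a p w * p.2).trace = _
  rw [Dpow_apply]

lemma hasFDerivAt_J (a : ℕ) (p : MM n) :
    HasFDerivAt (fun q : MM n => (q.1 ^ a * q.2).trace) (DJ a p) p := by
  have h := ((traceL n).hasFDerivAt).comp p
    ((mulL n).hasFDerivAt_of_bilinear (hasFDerivAt_pow a p)
      (hasFDerivAt_snd (p := p)))
  exact h

lemma trace_stdBasisMatrix_mul (i j : Fin n) (M : Mat) :
    (Matrix.single j i (1:ℝ) * M).trace = M i j := by
  simp [Matrix.trace, Matrix.diag, Matrix.mul_apply, Matrix.single,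
    Finset.sum_ite_eq, ite_and]

lemma trace_conj (A B : Mat) (i j : Fin n) :
    (A * (Matrix.single j i (1:ℝ) * B)).trace = (B * A) i j := by
  rw [Matrix.trace_mul_comm, mul_assoc, trace_stdBasisMatrix_mul]

lemma gradY_J (a : ℕ) (p : MM n) :
    gradY (fun q : MM n => (q.1 ^ a * q.2).trace) p = p.1 ^ a := by
  funext i j
  show fderiv ℝ (fun q : MM n => (q.1 ^ a * q.2).trace) p (0, Matrix.single j i 1)
      = (p.1 ^ a) i j
  rw [(hasFDerivAt_J a p).fderiv, DJ_apply]
  simp [trace_stdBasisMatrix_mul, Matrix.trace_mul_comm (p.1 ^ a)]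

lemma gradX_J (a : ℕ) (p : MM n) :
    gradX (fun q : MM n => (q.1 ^ a * q.2).trace) p
      = ∑ t ∈ Finset.range a, p.1 ^ (a - 1 - t) * p.2 * p.1 ^ t := by
  funext i j
  show fderiv ℝ (fun q : MM n => (q.1 ^ a * q.2).trace) p (Matrix.single j i 1, 0)
      = (∑ t ∈ Finset.range a, p.1 ^ (a - 1 - t) * p.2 * p.1 ^ t) i j
  rw [(hasFDerivAt_J a p).fderiv, DJ_apply]
  simp only [Matrix.mul_zero, Matrix.trace_zero, zero_add, Finset.sum_mul,
    Matrix.trace_sum, Finset.sum_apply, Matrix.sum_apply]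
  apply Finset.sum_congr rfl
  intro t ht
  rw [mul_assoc, mul_assoc, trace_conj]

lemma gradY_Jhat (l : ℕ) (p : MM n) : gradY (Jhat l) p = p.1 ^ (l - 1) :=
  gradY_J (l - 1) p

lemma gradX_Jhat (l : ℕ) (p : MM n) :
    gradX (Jhat l) p = ∑ t ∈ Finset.range (l - 1), p.1 ^ (l - 1 - 1 - t) * p.2 * p.1 ^ t :=
  gradX_J (l - 1) p

lemma piece (b c m : ℕ) (hb1 : 1 ≤ b) (hc1 : 1 ≤ c) (p : MM n) :
    (p.1 ^ m * (p.1 ^ (b - 1) *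
        ∑ t ∈ Finset.range (c - 1), p.1 ^ (c - 1 - 1 - t) * p.2 * p.1 ^ t)).trace
      = ((c : ℝ) - 1) * (p.1 ^ (b + c + m - 3) * p.2).trace := by
  rcases Nat.lt_or_ge c 2 with hc | hc
  · interval_cases c <;> simp
  rw [Finset.mul_sum, Finset.mul_sum, Matrix.trace_sum]
  have key : ∀ t ∈ Finset.range (c - 1),
      (p.1 ^ m * (p.1 ^ (b - 1) * (p.1 ^ (c - 1 - 1 - t) * p.2 * p.1 ^ t))).trace
        = (p.1 ^ (b + c + m - 3) * p.2).trace := by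
    intro t ht
    have ht' := Finset.mem_range.mp ht
    simp only [← mul_assoc]
    rw [Matrix.trace_mul_comm]
    simp only [← mul_assoc, ← pow_add]
    rw [show t + (m + (b - 1) + (c - 1 - 1 - t)) = b + c + m - 3 from by omega]
  rw [Finset.sum_congr rfl key, Finset.sum_const, nsmul_eq_mul, Finset.card_range]
  rw [Nat.cast_sub (by omega), Nat.cast_one]

lemma core (k l m : ℕ) (hk : 1 ≤ k) (hl : 1 ≤ l) (p : MM n) :
    pbracket m (Jhat k) (Jhat l) p
      = ((l : ℝ) - (k : ℝ)) * (p.1 ^ (k + l + m - 3) * p.2).trace := by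
  unfold pbracket
  rw [gradY_Jhat, gradY_Jhat, gradX_Jhat, gradX_Jhat]
  have hz : ∀ i ∈ Finset.range m,
      (p.2 * p.1 ^ (m - 1 - i) *
        (p.1 ^ (k - 1) * p.1 ^ i * p.1 ^ (l - 1)
          - p.1 ^ (l - 1) * p.1 ^ i * p.1 ^ (k - 1))).trace = 0 := by
    intro i _
    have h : p.1 ^ (k - 1) * p.1 ^ i * p.1 ^ (l - 1)
        = p.1 ^ (l - 1) * p.1 ^ i * p.1 ^ (k - 1) := by
      simp only [← pow_add]
      rw [show k - 1 + i + (l - 1) = l - 1 + i + (k - 1) from by omega]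
    rw [h, sub_self, mul_zero, Matrix.trace_zero]
  rw [Finset.sum_congr rfl hz, Finset.sum_const_zero, add_zero]
  rw [mul_sub, Matrix.trace_sub, piece k l m hk hl p]
  rw [show (p.1 ^ m * (p.1 ^ (l - 1) *
      ∑ t ∈ Finset.range (k - 1), p.1 ^ (k - 1 - 1 - t) * p.2 * p.1 ^ t)).trace
    = ((k : ℝ) - 1) * (p.1 ^ (l + k + m - 3) * p.2).trace from piece l k m hl hk p]
  rw [show l + k + m - 3 = k + l + m - 3 from by omega]
  ring

end CMaux

/-- For all `k, ℓ ≥ 1` and `m ≥ 0` with `k+ℓ+m ≥ 3` one has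
`{Ĵ_k, Ĵ_ℓ}_m = (ℓ−k) Ĵ_{k+ℓ+m−2}`, i.e.
`{Ĵ_k, Ĵ_ℓ}_m(X,Y) = (ℓ−k) tr(X^{k+ℓ+m−3} Y)`; moreover `{Ĵ_1, Ĵ_1}_0 = 0`. -/
theorem Jhat_Jhat_bracket (n : ℕ) (hn : 1 ≤ n) :
    (∀ k l m : ℕ, 1 ≤ k → 1 ≤ l → 3 ≤ k + l + m →
      ∀ p : MM n, pbracket m (Jhat k) (Jhat l) p =
        ((l : ℝ) - (k : ℝ)) * Jhat (k + l + m - 2) p) ∧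
    (∀ k l m : ℕ, 1 ≤ k → 1 ≤ l → 3 ≤ k + l + m →
      ∀ p : MM n, pbracket m (Jhat k) (Jhat l) p =
        ((l : ℝ) - (k : ℝ)) * (p.1 ^ (k + l + m - 3) * p.2).trace) ∧
    (∀ p : MM n, pbracket 0 (Jhat 1) (Jhat 1) p = 0) := by
  refine ⟨?_, ?_, ?_⟩
  · intro k l m hk hl h3 p
    rw [CMaux.core k l m hk hl p]
    unfold Jhat
    rw [show k + l + m - 2 - 1 = k + l + m - 3 from by omega]
  · intro k l m hk hl h3 p
    exact CMaux.core k l m hk hl p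
  · intro p
    simp [pbracket, CMaux.gradX_Jhat, CMaux.gradY_Jhat]
end
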